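/- arXiv:2508.18418 — 2 statements merged into one kernel-verified Lean document; each statement's English description precedes it below -/
import Mathlib

section
/- Let n ≥ 1 and let M, Φ, Ψ : ℝⁿ × ℝⁿ → ℝ be positive functions such that there exist constants C₀, c₀ > 0, s₀ > 0 and δ > 0 with: M(z) ≤ C₀(1 + ‖z‖)^{s₀}, Φ(z) ≥ c₀(1 + ‖z‖)^{-s₀}, Ψ(z) ≥ c₀(1 + ‖z‖)^{-s₀}, and Φ(z)Ψ(z) ≥ c₀(1 + ‖z‖)^{δ} for all z ∈ ℝ^{2n} (the strong uncertainty principle). Let p : ℝⁿ × ℝⁿ → ℂ be smooth, and suppose that for every j ∈ ℕ and all multi-indices α, β ∈ ℕⁿ there is a constant C_{j,α,β} such that |∂_ξ^α ∂_x^β p(x,ξ)| ≤ C_{j,α,β} · M(x,ξ) · h(x,ξ)^j · Ψ(x,ξ)^{-|α|} · Φ(x,ξ)^{-|β|} for all (x,ξ), where h = Φ^{-1}Ψ^{-1}. Then p is a Schwartz function on ℝ^{2n}, i.e., for all multi-indices γ and every N ∈ ℕ, sup_z (1 + ‖z‖)^N |∂^γ p(z)| < ∞. -/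
/-- Directional derivative operator `f ↦ (z ↦ ∂_v f(z))`. -/
noncomputable def pderivAt {E F : Type*} [NormedAddCommGroup E] [NormedSpace ℝ E]
    [NormedAddCommGroup F] [NormedSpace ℝ F] (v : E) (f : E → F) : E → F :=
  fun z => fderiv ℝ f z v

/-- Multi-index derivative `∂^γ` taken with respect to the directions `e i`,
the `i`-th one iterated `γ i` times. -/
noncomputable def multiDeriv {E F : Type*} [NormedAddCommGroup E] [NormedSpace ℝ E]
    [NormedAddCommGroup F] [NormedSpace ℝ F] {N : ℕ} (e : Fin N → E) (γ : Fin N → ℕ)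
    (f : E → F) : E → F :=
  ((List.ofFn fun i => (pderivAt (e i))^[γ i]).foldr (· ∘ ·) id) f

/-- The phase space `ℝⁿ × ℝⁿ`. -/
abbrev Phase (n : ℕ) := EuclideanSpace ℝ (Fin n) × EuclideanSpace ℝ (Fin n)

/-- The mixed derivative `∂_ξ^α ∂_x^β` on `ℝⁿ × ℝⁿ`. -/
noncomputable def mixedDeriv {F : Type*} [NormedAddCommGroup F] [NormedSpace ℝ F]
    (n : ℕ) (α β : Fin n → ℕ) (f : Phase n → F) : Phase n → F :=
  multiDeriv (fun i => ((0 : EuclideanSpace ℝ (Fin n)), EuclideanSpace.single i 1)) α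
    (multiDeriv (fun i => (EuclideanSpace.single i 1, (0 : EuclideanSpace ℝ (Fin n)))) β f)

/-- The Euclidean norm of `z = (x,ξ) ∈ ℝⁿ × ℝⁿ` viewed as a point of `ℝ^{2n}`. -/
noncomputable def euclNorm {n : ℕ} (z : Phase n) : ℝ :=
  Real.sqrt (‖z.1‖ ^ 2 + ‖z.2‖ ^ 2)

/-- Under the strong uncertainty principle, a symbol lying in `S(M h^j; Φ, Ψ)` for
every `j` is a Schwartz function on `ℝ^{2n}`. -/
theorem mem_all_Shj_isSchwartz (n : ℕ) (hn : 1 ≤ n)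
    (M Φ Ψ : Phase n → ℝ) (hM : ∀ z, 0 < M z) (hΦ : ∀ z, 0 < Φ z) (hΨ : ∀ z, 0 < Ψ z)
    (C₀ c₀ s₀ δ : ℝ) (hC₀ : 0 < C₀) (hc₀ : 0 < c₀) (hs₀ : 0 < s₀) (hδ : 0 < δ)
    (hMle : ∀ z, M z ≤ C₀ * (1 + euclNorm z) ^ s₀)
    (hΦge : ∀ z, Φ z ≥ c₀ * (1 + euclNorm z) ^ (-s₀))
    (hΨge : ∀ z, Ψ z ≥ c₀ * (1 + euclNorm z) ^ (-s₀))
    (hsup : ∀ z, Φ z * Ψ z ≥ c₀ * (1 + euclNorm z) ^ δ)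
    (p : Phase n → ℂ) (hp : ContDiff ℝ (⊤ : ℕ∞) p)
    (hbound : ∀ (j : ℕ) (α β : Fin n → ℕ), ∃ C : ℝ, ∀ z : Phase n,
      ‖mixedDeriv n α β p z‖ ≤ C * M z * ((Φ z)⁻¹ * (Ψ z)⁻¹) ^ j *
        Ψ z ^ (-(∑ i, α i : ℤ)) * Φ z ^ (-(∑ i, β i : ℤ))) :
    ∀ (α β : Fin n → ℕ) (N : ℕ), ∃ C : ℝ, ∀ z : Phase n,
      (1 + euclNorm z) ^ N * ‖mixedDeriv n α β p z‖ ≤ C := by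
  intro α β N
  set a := ∑ i, α i with ha
  set b := ∑ i, β i with hb
  set t : ℝ := s₀ * (1 + a + b) + N with ht
  have ht0 : 0 ≤ t := by positivity
  set j : ℕ := ⌈t / δ⌉₊ with hj
  have hjδ : t ≤ (j : ℝ) * δ := by
    rw [← div_le_iff₀ hδ]
    exact Nat.le_ceil _
  obtain ⟨C, hC⟩ := hbound j α β
  refine ⟨max C 0 * (C₀ * (c₀⁻¹ ^ j * (c₀⁻¹ ^ a * c₀⁻¹ ^ b))), fun z => ?_⟩
  set R := 1 + euclNorm z with hR
  have hRnn : 0 ≤ euclNorm z := Real.sqrt_nonneg _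
  have hR1 : 1 ≤ R := by rw [hR]; linarith
  have hR0 : (0 : ℝ) < R := lt_of_lt_of_le one_pos hR1
  have hΦz := hΦ z
  have hΨz := hΨ z
  have hMz : M z ≤ C₀ * R ^ s₀ := hMle z
  have hΦinv : (Φ z)⁻¹ ≤ c₀⁻¹ * R ^ s₀ := by
    have h1 : (0 : ℝ) < c₀ * R ^ (-s₀) := by positivity
    have h2 : (Φ z)⁻¹ ≤ (c₀ * R ^ (-s₀))⁻¹ := by
      exact inv_anti₀ h1 (hΦge z)
    rwa [mul_inv, Real.rpow_neg hR0.le, inv_inv] at h2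
  have hΨinv : (Ψ z)⁻¹ ≤ c₀⁻¹ * R ^ s₀ := by
    have h1 : (0 : ℝ) < c₀ * R ^ (-s₀) := by positivity
    have h2 : (Ψ z)⁻¹ ≤ (c₀ * R ^ (-s₀))⁻¹ := by
      exact inv_anti₀ h1 (hΨge z)
    rwa [mul_inv, Real.rpow_neg hR0.le, inv_inv] at h2
  have hΦΨ : (Φ z)⁻¹ * (Ψ z)⁻¹ ≤ c₀⁻¹ * R ^ (-δ) := by
    have h1 : (0 : ℝ) < c₀ * R ^ δ := by positivity
    have h2 : (Φ z * Ψ z)⁻¹ ≤ (c₀ * R ^ δ)⁻¹ := inv_anti₀ h1 (hsup z)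
    rw [mul_inv] at h2
    rwa [mul_inv, ← Real.rpow_neg hR0.le] at h2
  have key : ‖mixedDeriv n α β p z‖ ≤
      max C 0 * (C₀ * R ^ s₀) * (c₀⁻¹ * R ^ (-δ)) ^ j * (c₀⁻¹ * R ^ s₀) ^ a *
        (c₀⁻¹ * R ^ s₀) ^ b := by
    refine (hC z).trans ?_
    have hca : (∑ i, (α i : ℤ)) = (a : ℤ) := by rw [ha]; push_cast; rfl
    have hcb : (∑ i, (β i : ℤ)) = (b : ℤ) := by rw [hb]; push_cast; rfl
    rw [hca, hcb, zpow_neg, zpow_neg, zpow_natCast, zpow_natCast, ← inv_pow, ← inv_pow]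
    have h0 : (0:ℝ) ≤ M z := (hM z).le
    have h1 : (0:ℝ) ≤ (Φ z)⁻¹ * (Ψ z)⁻¹ := by positivity
    have h2 : (0:ℝ) ≤ (Ψ z)⁻¹ := by positivity
    have h3 : (0:ℝ) ≤ (Φ z)⁻¹ := by positivity
    gcongr <;> first
      | exact le_max_left _ _
      | exact h0
      | exact hMz
      | exact hΦΨ
      | exact hΨinv
      | exact hΦinv
      | positivity
  have eN : (R : ℝ) ^ (N : ℕ) = R ^ (N : ℝ) := (Real.rpow_natCast R N).symm
  have ej : (c₀⁻¹ * R ^ (-δ)) ^ j = c₀⁻¹ ^ j * R ^ (-δ * j) := by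
    rw [mul_pow, ← Real.rpow_natCast (R ^ (-δ)) j, ← Real.rpow_mul hR0.le]
  have ea : (c₀⁻¹ * R ^ s₀) ^ a = c₀⁻¹ ^ a * R ^ (s₀ * a) := by
    rw [mul_pow, ← Real.rpow_natCast (R ^ s₀) a, ← Real.rpow_mul hR0.le]
  have eb : (c₀⁻¹ * R ^ s₀) ^ b = c₀⁻¹ ^ b * R ^ (s₀ * b) := by
    rw [mul_pow, ← Real.rpow_natCast (R ^ s₀) b, ← Real.rpow_mul hR0.le]
  have hE : (N : ℝ) + s₀ + (-δ * j + (s₀ * a + s₀ * b)) ≤ 0 := by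
    have : t = s₀ * (1 + a + b) + N := ht
    nlinarith [hjδ]
  calc R ^ N * ‖mixedDeriv n α β p z‖
      ≤ R ^ N * (max C 0 * (C₀ * R ^ s₀) * (c₀⁻¹ * R ^ (-δ)) ^ j *
          (c₀⁻¹ * R ^ s₀) ^ a * (c₀⁻¹ * R ^ s₀) ^ b) := by
        have : (0 : ℝ) ≤ R ^ N := by positivity
        exact mul_le_mul_of_nonneg_left key this
    _ = max C 0 * (C₀ * (c₀⁻¹ ^ j * (c₀⁻¹ ^ a * c₀⁻¹ ^ b))) *
          (R ^ (N : ℝ) * R ^ s₀ * (R ^ (-δ * j) * (R ^ (s₀ * a) * R ^ (s₀ * b)))) := by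
        rw [eN, ej, ea, eb]; ring
    _ = max C 0 * (C₀ * (c₀⁻¹ ^ j * (c₀⁻¹ ^ a * c₀⁻¹ ^ b))) *
          R ^ ((N : ℝ) + s₀ + (-δ * j + (s₀ * a + s₀ * b))) := by
        rw [← Real.rpow_add hR0, ← Real.rpow_add hR0, ← Real.rpow_add hR0,
          ← Real.rpow_add hR0]
    _ ≤ max C 0 * (C₀ * (c₀⁻¹ ^ j * (c₀⁻¹ ^ a * c₀⁻¹ ^ b))) * 1 := by
        have h1 : R ^ ((N : ℝ) + s₀ + (-δ * j + (s₀ * a + s₀ * b))) ≤ 1 :=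
          Real.rpow_le_one_of_one_le_of_nonpos hR1 hE
        have h2 : (0 : ℝ) ≤ max C 0 * (C₀ * (c₀⁻¹ ^ j * (c₀⁻¹ ^ a * c₀⁻¹ ^ b))) := by
          positivity
        exact mul_le_mul_of_nonneg_left h1 h2
    _ = max C 0 * (C₀ * (c₀⁻¹ ^ j * (c₀⁻¹ ^ a * c₀⁻¹ ^ b))) := mul_one _
end

section
/- Let N ≥ 1, let p : ℝ^N → ℂ be the function defined by a polynomial in N variables of total degree exactly m ≥ 1, let ρ > 0, R ≥ 0, and C > 0. Suppose that for every multi-index γ ∈ ℕ^N and every z ∈ ℝ^N with ‖z‖ ≥ R one has |∂^γ p(z)| ≤ C · |p(z)| · ⟨z⟩^{-ρ|γ|}. Then there exists c > 0 such that |p(z)| ≥ c · ⟨z⟩^{ρ m} for all z with ‖z‖ ≥ R. -/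
/-- The multi-index derivative `∂^γ` on `ℝ^N` (coordinate directions). -/
noncomputable def coordDeriv {F : Type*} [NormedAddCommGroup F] [NormedSpace ℝ F]
    (N : ℕ) (γ : Fin N → ℕ) (f : EuclideanSpace ℝ (Fin N) → F) :
    EuclideanSpace ℝ (Fin N) → F :=
  multiDeriv (fun i => EuclideanSpace.single i (1 : ℝ)) γ f

section AuxHypo
open MvPolynomial

lemma evalDiff (N : ℕ) (Q : MvPolynomial (Fin N) ℂ) (z : EuclideanSpace ℝ (Fin N)) :
    DifferentiableAt ℝ
      (fun z : EuclideanSpace ℝ (Fin N) => MvPolynomial.eval (fun i => ((z i : ℝ) : ℂ)) Q) z := by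
  induction Q using MvPolynomial.induction_on with
  | C a => simp only [eval_C]; exact differentiableAt_const _
  | add p q hp hq => simp only [map_add]; exact hp.add hq
  | mul_X p i hp =>
      simp only [map_mul, eval_X]
      exact hp.mul (((Complex.ofRealCLM.comp
        (EuclideanSpace.proj i : EuclideanSpace ℝ (Fin N) →L[ℝ] ℝ))).differentiableAt)

lemma evalFDeriv (N : ℕ) (Q : MvPolynomial (Fin N) ℂ) (z : EuclideanSpace ℝ (Fin N)) (j : Fin N) :
    fderiv ℝ (fun z : EuclideanSpace ℝ (Fin N) =>
        MvPolynomial.eval (fun i => ((z i : ℝ) : ℂ)) Q) z (EuclideanSpace.single j 1)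
      = MvPolynomial.eval (fun i => ((z i : ℝ) : ℂ)) (MvPolynomial.pderiv j Q) := by
  induction Q using MvPolynomial.induction_on with
  | C a => simp [eval_C, pderiv_C]
  | add p q hp hq =>
      simp only [map_add]
      rw [fderiv_fun_add (evalDiff N p z) (evalDiff N q z)]
      simp [hp, hq]
  | mul_X p i hp =>
      have hc : (fun z : EuclideanSpace ℝ (Fin N) => ((z i : ℝ) : ℂ))
          = (Complex.ofRealCLM.comp (EuclideanSpace.proj i : EuclideanSpace ℝ (Fin N) →L[ℝ] ℝ)) := rfl
      simp only [map_mul, eval_X]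
      rw [fderiv_fun_mul (d := fun z : EuclideanSpace ℝ (Fin N) => ((z i : ℝ) : ℂ)) (evalDiff N p z) (by rw [hc]; exact ContinuousLinearMap.differentiableAt _)]
      rw [ContinuousLinearMap.add_apply, ContinuousLinearMap.smul_apply,
        ContinuousLinearMap.smul_apply, hp, hc, ContinuousLinearMap.fderiv]
      simp only [ContinuousLinearMap.comp_apply, Complex.ofRealCLM_apply, smul_eq_mul]
      rw [pderiv_mul]
      by_cases h : j = i
      · subst h; simp [EuclideanSpace.single_apply]; ring
      · simp [EuclideanSpace.single_apply, h, pderiv_X_of_ne (Ne.symm h), Ne.symm h, mul_comm]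

lemma pderivAt_eval (N : ℕ) (Q : MvPolynomial (Fin N) ℂ) (i : Fin N) :
    pderivAt (EuclideanSpace.single i (1 : ℝ))
        (fun z : EuclideanSpace ℝ (Fin N) => MvPolynomial.eval (fun i => ((z i : ℝ) : ℂ)) Q)
      = fun z => MvPolynomial.eval (fun i => ((z i : ℝ) : ℂ)) (MvPolynomial.pderiv i Q) := by
  funext z; exact evalFDeriv N Q z i

lemma pderivAt_iter_eval (N : ℕ) (i : Fin N) (k : ℕ) (Q : MvPolynomial (Fin N) ℂ) :
    (pderivAt (EuclideanSpace.single i (1 : ℝ)))^[k]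
        (fun z : EuclideanSpace ℝ (Fin N) => MvPolynomial.eval (fun i => ((z i : ℝ) : ℂ)) Q)
      = fun z => MvPolynomial.eval (fun i => ((z i : ℝ) : ℂ))
          ((fun q => MvPolynomial.pderiv i q)^[k] Q) := by
  induction k generalizing Q with
  | zero => simp
  | succ k ih =>
      rw [Function.iterate_succ_apply, Function.iterate_succ_apply, pderivAt_eval]
      exact ih _

lemma foldr_eval (N : ℕ) (γ : Fin N → ℕ) (l : List (Fin N)) (Q : MvPolynomial (Fin N) ℂ) :
    ((l.map fun i => (pderivAt (EuclideanSpace.single i (1 : ℝ)))^[γ i]).foldr (· ∘ ·) id)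
        (fun z : EuclideanSpace ℝ (Fin N) => MvPolynomial.eval (fun i => ((z i : ℝ) : ℂ)) Q)
      = fun z => MvPolynomial.eval (fun i => ((z i : ℝ) : ℂ))
          (((l.map fun i => (fun q => MvPolynomial.pderiv i q)^[γ i]).foldr (· ∘ ·) id) Q) := by
  induction l generalizing Q with
  | nil => simp
  | cons i l ih =>
      simp only [List.map_cons, List.foldr_cons, Function.comp_apply]
      rw [ih, pderivAt_iter_eval]

lemma coordDeriv_eval (N : ℕ) (γ : Fin N → ℕ) (Q : MvPolynomial (Fin N) ℂ) :
    coordDeriv N γ (fun z : EuclideanSpace ℝ (Fin N) =>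
        MvPolynomial.eval (fun i => ((z i : ℝ) : ℂ)) Q)
      = fun z => MvPolynomial.eval (fun i => ((z i : ℝ) : ℂ))
          ((((List.finRange N).map fun i => (fun q => MvPolynomial.pderiv i q)^[γ i]).foldr
            (· ∘ ·) id) Q) := by
  rw [coordDeriv, multiDeriv, List.ofFn_eq_map]
  exact foldr_eval N γ _ Q

lemma pderiv_iter_monomial (N : ℕ) (i : Fin N) (k : ℕ) (e : Fin N →₀ ℕ) (a : ℂ) :
    (fun q => MvPolynomial.pderiv i q)^[k] (MvPolynomial.monomial e a)
      = MvPolynomial.monomial (e - Finsupp.single i k) (a * ((e i).descFactorial k : ℂ)) := by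
  induction k with
  | zero => simp
  | succ k ih =>
      rw [Function.iterate_succ_apply', ih, pderiv_monomial]
      rw [tsub_tsub, ← Finsupp.single_add, Finsupp.tsub_apply, Finsupp.single_eq_same,
        Nat.descFactorial_succ, Nat.cast_mul]
      ring_nf

lemma foldr_pderiv_add (N : ℕ) (γ : Fin N → ℕ) (l : List (Fin N))
    (q r : MvPolynomial (Fin N) ℂ) :
    ((l.map fun i => (fun q => MvPolynomial.pderiv i q)^[γ i]).foldr (· ∘ ·) id) (q + r)
      = ((l.map fun i => (fun q => MvPolynomial.pderiv i q)^[γ i]).foldr (· ∘ ·) id) q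
        + ((l.map fun i => (fun q => MvPolynomial.pderiv i q)^[γ i]).foldr (· ∘ ·) id) r := by
  induction l generalizing q r with
  | nil => simp
  | cons i l ih =>
      simp only [List.map_cons, List.foldr_cons, Function.comp_apply]
      rw [ih]
      induction γ i with
      | zero => simp
      | succ k ihk => rw [Function.iterate_succ_apply', Function.iterate_succ_apply',
          Function.iterate_succ_apply', ihk, map_add]

lemma sum_single_apply_eq_zero (N : ℕ) (γ : Fin N → ℕ) (l : List (Fin N)) (i : Fin N)
    (hi : i ∉ l) : ((l.map fun j => Finsupp.single j (γ j)).sum) i = 0 := by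
  induction l with
  | nil => simp
  | cons j l ihl =>
      simp only [List.mem_cons, not_or] at hi
      simp only [List.map_cons, List.sum_cons, Finsupp.add_apply]
      rw [Finsupp.single_apply, if_neg (Ne.symm hi.1), ihl hi.2]

lemma foldr_pderiv_monomial (N : ℕ) (γ : Fin N → ℕ) (l : List (Fin N)) (hl : l.Nodup)
    (e : Fin N →₀ ℕ) (a : ℂ) :
    ((l.map fun i => (fun q => MvPolynomial.pderiv i q)^[γ i]).foldr (· ∘ ·) id)
        (MvPolynomial.monomial e a)
      = MvPolynomial.monomial (e - (l.map fun i => Finsupp.single i (γ i)).sum)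
          (a * ((l.map fun i => (((e i).descFactorial (γ i) : ℕ) : ℂ)).prod)) := by
  induction l with
  | nil => simp
  | cons i l ih =>
      have hi : i ∉ l := (List.nodup_cons.mp hl).1
      have hsum : ((l.map fun j => Finsupp.single j (γ j)).sum) i = 0 :=
        sum_single_apply_eq_zero N γ l i hi
      simp only [List.map_cons, List.foldr_cons, Function.comp_apply, List.sum_cons,
        List.prod_cons]
      rw [ih (List.nodup_cons.mp hl).2, pderiv_iter_monomial]
      rw [tsub_tsub]
      congr 1
      · rw [add_comm]
      · rw [Finsupp.tsub_apply, hsum, Nat.sub_zero]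
        ring


end AuxHypo

/-- For a polynomial symbol of degree exactly `m ≥ 1`, the derivative estimates of
`Γ_ρ`-hypoellipticity `|∂^γ p| ≤ C |p| ⟨z⟩^{-ρ|γ|}` imply the lower bound
`|p(z)| ≥ c ⟨z⟩^{ρ m}` for `‖z‖ ≥ R`. -/
theorem polynomial_hypoelliptic_lower_bound (N : ℕ) (hN : 1 ≤ N)
    (P : MvPolynomial (Fin N) ℂ) (m : ℕ) (hm : 1 ≤ m) (hdeg : P.totalDegree = m)
    (p : EuclideanSpace ℝ (Fin N) → ℂ)
    (hp : p = fun z => MvPolynomial.eval (fun i => ((z i : ℝ) : ℂ)) P)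
    (ρ R C : ℝ) (hρ : 0 < ρ) (hR : 0 ≤ R) (hC : 0 < C)
    (hder : ∀ (γ : Fin N → ℕ) (z : EuclideanSpace ℝ (Fin N)), ‖z‖ ≥ R →
      ‖coordDeriv N γ p z‖ ≤
        C * ‖p z‖ * ((1 + ‖z‖ ^ 2) ^ ((1 : ℝ) / 2)) ^ (-(ρ * (∑ i, γ i : ℝ)))) :
    ∃ c > (0 : ℝ), ∀ z : EuclideanSpace ℝ (Fin N), ‖z‖ ≥ R →
      ‖p z‖ ≥ c * ((1 + ‖z‖ ^ 2) ^ ((1 : ℝ) / 2)) ^ (ρ * (m : ℝ)) := by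
  classical
  have hP0 : P ≠ 0 := by
    intro h
    rw [h, MvPolynomial.totalDegree_zero] at hdeg
    omega
  have hsupp : P.support.Nonempty := by
    rwa [MvPolynomial.support_nonempty]
  obtain ⟨d, hd, hds⟩ := Finset.exists_mem_eq_sup P.support hsupp
    (fun s : Fin N →₀ ℕ => s.sum fun _ e => e)
  have hdm : (d.sum fun _ e => e) = m := by rw [← hds]; exact hdeg
  have hdm' : ∑ i, d i = m := by
    rw [← hdm]
    exact (Finsupp.sum_fintype d (fun _ e => e) (fun _ => rfl)).symm
  set c : ℂ := MvPolynomial.coeff d P * ∏ i, (((d i).factorial : ℕ) : ℂ) with hc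
  have hc0 : c ≠ 0 := by
    apply mul_ne_zero
    · exact MvPolynomial.mem_support_iff.mp hd
    · rw [Finset.prod_ne_zero_iff]
      exact fun i _ => Nat.cast_ne_zero.mpr (Nat.factorial_ne_zero _)
  -- the polynomial computation
  have hOp : (((List.finRange N).map fun i => (fun q => MvPolynomial.pderiv i q)^[d i]).foldr
      (· ∘ ·) id) P = MvPolynomial.C c := by
    set Op := (((List.finRange N).map fun i =>
        (fun q : MvPolynomial (Fin N) ℂ => MvPolynomial.pderiv i q)^[d i]).foldr (· ∘ ·) id)
      with hOpdef
    have hadd : ∀ q r, Op (q + r) = Op q + Op r := fun q r =>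
      foldr_pderiv_add N (fun i => d i) _ q r
    let OpH : MvPolynomial (Fin N) ℂ →+ MvPolynomial (Fin N) ℂ := AddMonoidHom.mk' Op hadd
    have hsum : Op P = ∑ e ∈ P.support, Op (MvPolynomial.monomial e (MvPolynomial.coeff e P)) := by
      conv_lhs => rw [← MvPolynomial.support_sum_monomial_coeff P]
      exact map_sum OpH _ P.support
    rw [hsum, Finset.sum_eq_single d ?h0 (fun h => absurd hd h)]
    · rw [hOpdef]
      rw [foldr_pderiv_monomial N (fun i => d i) _ (List.nodup_finRange N)]
      have hS : ((List.finRange N).map fun i => Finsupp.single i (d i)).sum = d := by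
        rw [← Fin.sum_univ_def]
        exact Finsupp.univ_sum_single d
      have hprod : ((List.finRange N).map fun i =>
          (((d i).descFactorial (d i) : ℕ) : ℂ)).prod = ∏ i, (((d i).factorial : ℕ) : ℂ) := by
        rw [← Fin.prod_univ_def]
        simp [Nat.descFactorial_self]
      rw [hS, tsub_self, hprod, hc, MvPolynomial.C_apply]
    case h0 =>
      intro e he hne
      have hlt : ∃ i, e i < d i := by
        by_contra hcon
        push_neg at hcon
        have h1 : ∑ i, d i ≤ ∑ i, e i := Finset.sum_le_sum fun i _ => hcon i
        have h2 : ∑ i, e i ≤ m := by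
          have h3 := MvPolynomial.le_totalDegree (p := P) he
          rw [hdeg] at h3
          calc ∑ i, e i = e.sum fun _ k => k :=
                (Finsupp.sum_fintype e (fun _ k => k) (fun _ => rfl)).symm
            _ ≤ m := h3
        have heq : ∑ i, d i = ∑ i, e i := le_antisymm h1 (by omega)
        have h4 : ∀ i ∈ Finset.univ, d i = e i :=
          (Finset.sum_eq_sum_iff_of_le fun i _ => hcon i).mp heq
        exact hne (Finsupp.ext fun i => (h4 i (Finset.mem_univ i)).symm)
      obtain ⟨i0, hi0⟩ := hlt
      rw [hOpdef]
      rw [foldr_pderiv_monomial N (fun i => d i) _ (List.nodup_finRange N)]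
      have hz : ((List.finRange N).map fun i =>
          (((e i).descFactorial (d i) : ℕ) : ℂ)).prod = 0 := by
        apply List.prod_eq_zero
        have h5 : (((e i0).descFactorial (d i0) : ℕ) : ℂ) = 0 := by
          rw [Nat.cast_eq_zero]
          exact Nat.descFactorial_eq_zero_iff_lt.mpr hi0
        exact h5 ▸ List.mem_map_of_mem (List.mem_finRange i0)
      rw [hz, mul_zero, map_zero]
  have key : coordDeriv N (fun i => d i) p = fun _ => c := by
    rw [hp, coordDeriv_eval, hOp]
    funext z
    simp
  refine ⟨‖c‖ / C, div_pos (norm_pos_iff.mpr hc0) hC, fun z hzR => ?_⟩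
  have h := hder (fun i => d i) z hzR
  rw [key] at h
  have hcast : (∑ i, ((d i : ℕ) : ℝ)) = (m : ℝ) := by exact_mod_cast hdm'
  rw [hcast] at h
  set t : ℝ := (1 + ‖z‖ ^ 2) ^ ((1 : ℝ) / 2) with hT
  have ht : 0 < t := Real.rpow_pos_of_pos (by positivity) _
  have ht2 : 0 < t ^ (ρ * (m : ℝ)) := Real.rpow_pos_of_pos ht _
  rw [Real.rpow_neg ht.le] at h
  rw [ge_iff_le, div_mul_eq_mul_div, div_le_iff₀ hC]
  calc ‖c‖ * t ^ (ρ * (m : ℝ))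
      ≤ C * ‖p z‖ * (t ^ (ρ * (m : ℝ)))⁻¹ * t ^ (ρ * (m : ℝ)) :=
        mul_le_mul_of_nonneg_right h ht2.le
    _ = C * ‖p z‖ := by field_simp
    _ = ‖p z‖ * C := mul_comm _ _
end
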